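/- In the minority game with 2k+1 players, for each t ∈ {0,...,k}, the profile in which t players choose -1, t players choose +1, and the remaining 2k+1-2t players each mix with probability 1/2 is a Nash equilibrium. -/

import Mathlib

open Finset

/-- Payoff in the minority game: player `i` gets `f n` where `n` is the number of
players (including `i`) choosing the same action as `i`.
The action `true` represents `-1`, `false` represents `+1`. -/
def mgPayoff (f : ℕ → ℝ) {N : ℕ} (a : Fin N → Bool) (i : Fin N) : ℝ :=
  f ((Finset.univ.filter fun j => a j = a i).card)

/-- Pure Nash equilibrium of the minority game. -/
def mgPureNE (f : ℕ → ℝ) {N : ℕ} (a : Fin N → Bool) : Prop :=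
  ∀ i : Fin N, mgPayoff f (Function.update a i (!(a i))) i ≤ mgPayoff f a i

/-- Probability of the pure profile `a` under the mixed profile `σ`, where
`σ j` is the probability that player `j` chooses `-1` (i.e. `true`). -/
noncomputable def mgProb {N : ℕ} (σ : Fin N → ℝ) (a : Fin N → Bool) : ℝ :=
  ∏ j, if a j then σ j else 1 - σ j

/-- Expected payoff of player `i` under the mixed profile `σ`. -/
noncomputable def mgEPay (f : ℕ → ℝ) {N : ℕ} (σ : Fin N → ℝ) (i : Fin N) : ℝ :=
  ∑ a : Fin N → Bool, mgProb σ a * f ((Finset.univ.filter fun j => a j = a i).card)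

/-- Mixed Nash equilibrium of the minority game: all probabilities lie in [0,1]
and no player can strictly improve by a unilateral deviation. -/
noncomputable def mgMixedNE (f : ℕ → ℝ) {N : ℕ} (σ : Fin N → ℝ) : Prop :=
  (∀ i, 0 ≤ σ i ∧ σ i ≤ 1) ∧
    ∀ (i : Fin N) (τ : ℝ), 0 ≤ τ → τ ≤ 1 →
      mgEPay f (Function.update σ i τ) i ≤ mgEPay f σ i

/-!
Player `i`'s expected payoff is affine in its own probability `τ` of playing `true`, with slope
the difference between the payoffs of its two pure replies. Flipping `i` together with every
player who mixes uniformly preserves the probability of the others' actions and exchanges the two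
replies; on the support of `σ` it changes the number of players on `i`'s side by
`#{j ≠ i | σ j = 0} - #{j ≠ i | σ j = 1}`. Since `f` is antitone, the sign of the slope is
therefore determined by these two counts, which the hypotheses pin down: `i`'s pure action is a
best reply, and a uniformly mixing `i` is indifferent.
-/

open Function

namespace MinorityGame

variable {N : ℕ} (σ : Fin N → ℝ) (i : Fin N)

def sameCount (a : Fin N → Bool) : ℕ := #{j | a j = a i}

noncomputable def othersWeight (a : Fin N → Bool) : ℝ :=
  ∏ j ∈ univ.erase i, if a j then σ j else 1 - σ j

noncomputable def replyPay (f : ℕ → ℝ) (b : Bool) : ℝ :=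
  ∑ a ∈ univ.filter (fun a : Fin N → Bool => a i = b), othersWeight σ i a * f (sameCount i a)

noncomputable def othersCount (x : ℝ) : ℕ := #((univ.filter fun j => σ j = x).erase i)

noncomputable def flipSelfAndMixers (a : Fin N → Bool) : Fin N → Bool :=
  fun j => if j = i ∨ σ j = 1 / 2 then !a j else a j

variable {σ i}

lemma sameCount_mem_Icc (a : Fin N → Bool) : sameCount i a ∈ Set.Icc 1 N :=
  ⟨card_pos.mpr ⟨i, by simp⟩,
    (card_filter_le _ _).trans (card_univ.trans (Fintype.card_fin N)).le⟩

lemma mgProb_update (τ : ℝ) (a : Fin N → Bool) :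
    mgProb (update σ i τ) a = (if a i then τ else 1 - τ) * othersWeight σ i a := by
  rw [mgProb, ← mul_prod_erase univ _ (mem_univ i), update_self]
  congr 1
  exact prod_congr rfl fun j hj => by rw [update_of_ne (ne_of_mem_erase hj)]

lemma mgEPay_update (f : ℕ → ℝ) (τ : ℝ) :
    mgEPay f (update σ i τ) i = τ * replyPay σ i f true + (1 - τ) * replyPay σ i f false := by
  rw [mgEPay, ← sum_filter_add_sum_filter_not univ (fun a => a i = true), replyPay, replyPay,
    mul_sum, mul_sum]
  simp only [Bool.not_eq_true]
  congr 1 <;> refine sum_congr rfl fun a ha => ?_ <;>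
    simp only [mem_filter, mem_univ, true_and] at ha <;>
    simp [mgProb_update, ha, sameCount, mul_assoc]

lemma nonneg_le_one_of_pure_or_uniform (hσ : ∀ j, σ j = 1 ∨ σ j = 0 ∨ σ j = 1 / 2)
    (j : Fin N) : 0 ≤ σ j ∧ σ j ≤ 1 := by
  rcases hσ j with h | h | h <;> norm_num [h]

lemma othersWeight_nonneg (hσ : ∀ j, 0 ≤ σ j ∧ σ j ≤ 1) (a : Fin N → Bool) :
    0 ≤ othersWeight σ i a :=
  prod_nonneg fun j _ => by split_ifs <;> linarith [hσ j]

lemma flipSelfAndMixers_involutive : Involutive (flipSelfAndMixers σ i) := fun a => by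
  funext j; unfold flipSelfAndMixers; split_ifs <;> simp

lemma flipSelfAndMixers_apply_self (a : Fin N → Bool) : flipSelfAndMixers σ i a i = !a i := by
  simp [flipSelfAndMixers]

lemma othersWeight_flipSelfAndMixers (a : Fin N → Bool) :
    othersWeight σ i (flipSelfAndMixers σ i a) = othersWeight σ i a := by
  refine prod_congr rfl fun j hj => ?_
  by_cases h : σ j = 1 / 2
  · cases a j <;> simp [flipSelfAndMixers, h] <;> norm_num
  · simp only [flipSelfAndMixers, ne_of_mem_erase hj, h, or_self, if_false]

lemma replyPay_false_eq (f : ℕ → ℝ) : replyPay σ i f false =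
    ∑ a ∈ univ.filter (fun a : Fin N → Bool => a i = true),
      othersWeight σ i a * f (sameCount i (flipSelfAndMixers σ i a)) := by
  symm
  refine sum_nbij' (flipSelfAndMixers σ i) (flipSelfAndMixers σ i) ?_ ?_
    (fun a _ => flipSelfAndMixers_involutive a) (fun a _ => flipSelfAndMixers_involutive a)
    fun a _ => ?_
  · simp [flipSelfAndMixers_apply_self]
  · simp [flipSelfAndMixers_apply_self]
  · rw [othersWeight_flipSelfAndMixers]

lemma othersCount_le (x : ℝ) : othersCount σ i x ≤ #{j | σ j = x} := card_erase_le

lemma othersCount_of_ne {x : ℝ} (h : σ i ≠ x) : othersCount σ i x = #{j | σ j = x} :=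
  congrArg card (erase_eq_of_notMem (by simpa using h))

lemma othersCount_eq_sum (x : ℝ) :
    othersCount σ i x = ∑ j, if j ≠ i ∧ σ j = x then 1 else 0 := by
  rw [othersCount, ← card_filter]; congr 1; ext j; simp [and_comm]

lemma support_of_othersWeight_ne_zero {a : Fin N → Bool} (hw : othersWeight σ i a ≠ 0)
    {j : Fin N} (hj : j ≠ i) : (σ j = 1 → a j = true) ∧ (σ j = 0 → a j = false) := by
  have := prod_ne_zero_iff.mp hw j (mem_erase.mpr ⟨hj, mem_univ j⟩)
  constructor <;> intro h <;> cases ha : a j <;> simp_all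

lemma sameCount_flipSelfAndMixers_add (hσ : ∀ j, σ j = 1 ∨ σ j = 0 ∨ σ j = 1 / 2)
    {a : Fin N → Bool} (hai : a i = true) (hw : othersWeight σ i a ≠ 0) :
    sameCount i (flipSelfAndMixers σ i a) + othersCount σ i 1 =
      sameCount i a + othersCount σ i 0 := by
  simp only [sameCount, othersCount_eq_sum, flipSelfAndMixers_apply_self, card_filter,
    ← sum_add_distrib]
  refine sum_congr rfl fun j _ => ?_
  by_cases hj : j = i
  · subst hj; simp [hai, flipSelfAndMixers_apply_self]
  have hsupp := support_of_othersWeight_ne_zero hw hj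
  rcases hσ j with h | h | h <;> cases ha : a j <;> simp_all [flipSelfAndMixers]

variable {f : ℕ → ℝ}

lemma replyPay_false_le_true (hσ : ∀ j, σ j = 1 ∨ σ j = 0 ∨ σ j = 1 / 2)
    (hf : AntitoneOn f (Set.Icc 1 N))
    (hcount : othersCount σ i 1 ≤ othersCount σ i 0) :
    replyPay σ i f false ≤ replyPay σ i f true := by
  rw [replyPay_false_eq, replyPay]
  refine sum_le_sum fun a ha => ?_
  by_cases hw : othersWeight σ i a = 0
  · simp [hw]
  have := sameCount_flipSelfAndMixers_add hσ (mem_filter.mp ha).2 hw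
  exact mul_le_mul_of_nonneg_left (hf (sameCount_mem_Icc a) (sameCount_mem_Icc _) (by omega))
    (othersWeight_nonneg (nonneg_le_one_of_pure_or_uniform hσ) a)

lemma replyPay_true_le_false (hσ : ∀ j, σ j = 1 ∨ σ j = 0 ∨ σ j = 1 / 2)
    (hf : AntitoneOn f (Set.Icc 1 N))
    (hcount : othersCount σ i 0 ≤ othersCount σ i 1) :
    replyPay σ i f true ≤ replyPay σ i f false := by
  rw [replyPay_false_eq, replyPay]
  refine sum_le_sum fun a ha => ?_
  by_cases hw : othersWeight σ i a = 0
  · simp [hw]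
  have := sameCount_flipSelfAndMixers_add hσ (mem_filter.mp ha).2 hw
  exact mul_le_mul_of_nonneg_left (hf (sameCount_mem_Icc _) (sameCount_mem_Icc a) (by omega))
    (othersWeight_nonneg (nonneg_le_one_of_pure_or_uniform hσ) a)

end MinorityGame

open MinorityGame

theorem stmt_12_general (k t : ℕ) (f : ℕ → ℝ)
    (hf : StrictAntiOn f (Set.Icc 1 (2 * k + 1)))
    (σ : Fin (2 * k + 1) → ℝ)
    (hσ : ∀ i, σ i = 1 ∨ σ i = 0 ∨ σ i = 1 / 2)
    (h1 : (Finset.univ.filter fun i => σ i = 1).card = t)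
    (h0 : (Finset.univ.filter fun i => σ i = 0).card = t) :
    mgMixedNE f σ := by
  refine ⟨nonneg_le_one_of_pure_or_uniform hσ, fun i τ hτ0 hτ1 => ?_⟩
  have hσi := mgEPay_update (σ := σ) (i := i) f (σ i)
  rw [update_eq_self] at hσi
  rw [mgEPay_update, hσi]
  have hle := replyPay_false_le_true (i := i) hσ hf.antitoneOn
  have hge := replyPay_true_le_false (i := i) hσ hf.antitoneOn
  have hcount₁ := othersCount_le (σ := σ) (i := i) 1
  have hcount₀ := othersCount_le (σ := σ) (i := i) 0
  rcases hσ i with hi | hi | hi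
  · have := hle (by rw [othersCount_of_ne (x := 0) (by norm_num [hi])]; omega)
    rw [hi]; nlinarith
  · have := hge (by rw [othersCount_of_ne (x := 1) (by norm_num [hi])]; omega)
    rw [hi]; nlinarith
  · have hbalance : othersCount σ i 1 = othersCount σ i 0 := by
      rw [othersCount_of_ne (by norm_num [hi]), othersCount_of_ne (by norm_num [hi]), h0, h1]
    rw [hi, le_antisymm (hle hbalance.le) (hge hbalance.ge)]
    linarith

/-- For each t ∈ {0,...,k}, the profile where t players choose -1, t players
choose +1, and the remaining 2k+1-2t players mix uniformly is a Nash equilibrium. -/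
theorem stmt_12 (k t : ℕ) (ht : t ≤ k) (f : ℕ → ℝ)
    (hf : StrictAntiOn f (Set.Icc 1 (2 * k + 1)))
    (σ : Fin (2 * k + 1) → ℝ)
    (hσ : ∀ i, σ i = 1 ∨ σ i = 0 ∨ σ i = 1 / 2)
    (h1 : (Finset.univ.filter fun i => σ i = 1).card = t)
    (h0 : (Finset.univ.filter fun i => σ i = 0).card = t) :
    mgMixedNE f σ :=
  stmt_12_general k t f hf σ hσ h1 h0
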